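/- arXiv:1101.3262 — 3 statements merged into one kernel-verified Lean document; each statement's English description precedes it below -/
import Mathlib

section
/- Swapping adjacent binders in a frame preserves frame equivalence: (ν a)(ν b)Ψ and (ν b)(ν a)Ψ entail exactly the same conditions. -/
/-- Nominal sets of assertions and conditions with an equivariant entailment
relation.  Names are drawn from the countably infinite set ℕ, acted on by
permutations. -/
structure NomEnt where
  A : Type                      -- assertions
  C : Type                      -- conditions
  actA : Equiv.Perm ℕ → A → A
  actC : Equiv.Perm ℕ → C → C
  actA_one : ∀ x, actA 1 x = x
  actA_mul : ∀ π σ x, actA (π * σ) x = actA π (actA σ x)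
  actC_one : ∀ x, actC 1 x = x
  actC_mul : ∀ π σ x, actC (π * σ) x = actC π (actC σ x)
  suppA : A → Finset ℕ          -- (finite) support of an assertion
  suppC : C → Finset ℕ          -- (finite) support of a condition
  suppA_spec : ∀ x (π : Equiv.Perm ℕ), (∀ a ∈ suppA x, π a = a) → actA π x = x
  suppC_spec : ∀ x (π : Equiv.Perm ℕ), (∀ a ∈ suppC x, π a = a) → actC π x = x
  ent : A → C → Prop
  ent_equivariant : ∀ (π : Equiv.Perm ℕ) Ψ φ, ent Ψ φ ↔ ent (actA π Ψ) (actC π φ)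

/-- A frame is a finite list of binding names together with an assertion. -/
def Frame (S : NomEnt) := List ℕ × S.A

/-- Alpha-equivalence of frames: the frames are related by a permutation π
mapping the binders of one to the binders of the other, mapping one assertion
to the other, and fixing all names outside the two binder lists. -/
def FrameAlpha (S : NomEnt) (F G : Frame S) : Prop :=
  ∃ π : Equiv.Perm ℕ,
    F.1.map (fun a => π a) = G.1 ∧
    S.actA π F.2 = G.2 ∧
    ∀ a : ℕ, a ∉ F.1 → a ∉ G.1 → π a = a

/-- Frame entailment: `(ν as)Ψ ⊢ φ` iff some alpha-variant of the frame has
its binders fresh for φ and its assertion entailing φ. -/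
def FrameEnt (S : NomEnt) (F : Frame S) (φ : S.C) : Prop :=
  ∃ G : Frame S, FrameAlpha S F G ∧ (∀ c ∈ G.1, c ∉ S.suppC φ) ∧ S.ent G.2 φ

/-- Frame equivalence: entailing the same conditions. -/
def FrameEquiv (S : NomEnt) (F G : Frame S) : Prop :=
  ∀ φ : S.C, FrameEnt S F φ ↔ FrameEnt S G φ

theorem FrameEnt.of_perm {S : NomEnt} {l l' : List ℕ} {Ψ : S.A} {φ : S.C}
    (h : FrameEnt S (l, Ψ) φ) (hl : l.Perm l') : FrameEnt S (l', Ψ) φ := by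
  obtain ⟨G, ⟨π, hmap, hact, hfix⟩, hfresh, hent⟩ := h
  have hmem : ∀ c, c ∈ l'.map (fun a => π a) ↔ c ∈ G.1 := fun c => by
    rw [← hmap]; exact (hl.map _).mem_iff.symm
  -- The same renaming π works: alpha-conversion and freshness see the binders only through membership.
  refine ⟨(l'.map (fun a => π a), G.2), ⟨π, rfl, hact, ?_⟩, ?_, hent⟩
  · exact fun c hc hc' => hfix c (mt hl.mem_iff.mp hc) (mt (hmem c).mpr hc')
  · exact fun c hc => hfresh c ((hmem c).mp hc)

theorem frameEquiv_of_perm (S : NomEnt) {l l' : List ℕ} (Ψ : S.A) (hl : l.Perm l') :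
    FrameEquiv S (l, Ψ) (l', Ψ) :=
  fun _ => ⟨fun h => h.of_perm hl, fun h => h.of_perm hl.symm⟩

/-- swapping adjacent binders in a frame preserves frame
equivalence: `(ν a)(ν b)Ψ` and `(ν b)(ν a)Ψ` entail exactly the same
conditions. -/
theorem frame_swap_binders (S : NomEnt) (a b : ℕ) (Ψ : S.A) :
    ∀ φ : S.C, FrameEnt S ([a, b], Ψ) φ ↔ FrameEnt S ([b, a], Ψ) φ :=
  frameEquiv_of_perm S Ψ (List.Perm.swap b a [])
end

section
/- Frame composition is not compositional in general: there exists a psi-calculus (satisfying all requisites) and frames F, G, H such that F ≃ G but not F ⊗ H ≃ G ⊗ H. Concretely, take assertions Ψ, Ψ', and Ψ_a for each name a, conditions φ' and φ_a, entailment given by Ψ_a ⊢ φ_a and Ψ' ⊢ φ' (and nothing else except unit laws), and composition defined by Ψ ⊗ Ψ = Ψ and all other nonunit compositions yielding Ψ'; then (ν a)Ψ_a ≃ Ψ as frames, but Ψ ⊗ (ν a)Ψ_a is not equivalent to Ψ ⊗ Ψ. -/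
/-- Assertion equivalence. -/
def AEquiv (S : NomEnt) (Ψ Ψ' : S.A) : Prop := ∀ φ, S.ent Ψ φ ↔ S.ent Ψ' φ

/-- A full psi-calculus over nominal assertions/conditions: terms, channel
equivalence, composition and unit, satisfying all the requisites on valid
psi-calculus parameters. -/
structure PsiCalc extends NomEnt where
  T : Type                         -- data terms
  chanEq : T → T → C               -- channel equivalence
  comp : A → A → A                 -- composition of assertions
  unit : A                         -- unit assertion
  chanSym : ∀ Ψ M N, ent Ψ (chanEq M N) → ent Ψ (chanEq N M)
  chanTrans : ∀ Ψ M N L,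
    ent Ψ (chanEq M N) → ent Ψ (chanEq N L) → ent Ψ (chanEq M L)
  compositional : ∀ Ψ Ψ' Ψ'', AEquiv toNomEnt Ψ Ψ' →
    AEquiv toNomEnt (comp Ψ Ψ'') (comp Ψ' Ψ'')
  identity : ∀ Ψ, AEquiv toNomEnt (comp Ψ unit) Ψ
  assoc : ∀ Ψ Ψ' Ψ'', AEquiv toNomEnt (comp (comp Ψ Ψ') Ψ'') (comp Ψ (comp Ψ' Ψ''))
  comm : ∀ Ψ Ψ', AEquiv toNomEnt (comp Ψ Ψ') (comp Ψ' Ψ)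

/-- Composition of frames (for representatives whose binders are chosen
mutually fresh): concatenate the binders and compose the assertions. -/
def frameComp (S : PsiCalc) (F G : Frame S.toNomEnt) : Frame S.toNomEnt :=
  (F.1 ++ G.1, S.comp F.2 G.2)

/-!
Take assertions `1, Ψ, Ψ'` and `Ψ_a` (one for each name `a`), with `Ψ_a ⊢ φ_a`, `Ψ' ⊢ φ'` and
`1 ⊢ φ₁` as the only entailments, and let `Ψ ⊗ Ψ = Ψ` while every other composition of non-units
is `Ψ'`. Since entailment separates assertions, the requisites on composition hold trivially.
Neither `Ψ` nor `(ν a)Ψ_a` entails anything: the only condition `Ψ_a` entails is `φ_a`, for which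
the binder `a` is never fresh. But `Ψ ⊗ (ν a)Ψ_a = (ν a)Ψ'` entails the name-free condition `φ'`,
while `Ψ ⊗ Ψ = Ψ` does not.
-/

section FrameEnt

variable {S : NomEnt}

theorem frameEnt_nil_iff {Ψ : S.A} {φ : S.C} :
    FrameEnt S (([], Ψ) : Frame S) φ ↔ S.ent Ψ φ := by
  constructor
  · rintro ⟨⟨bs, Ψ'⟩, ⟨π, hbs, hΨ, hfix⟩, -, hent⟩
    obtain rfl : bs = [] := hbs.symm.trans List.map_nil
    obtain rfl : π = 1 := Equiv.ext fun a => hfix a List.not_mem_nil List.not_mem_nil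
    rwa [← hΨ, S.actA_one] at hent
  · intro hent
    exact ⟨([], Ψ), ⟨1, rfl, S.actA_one Ψ, fun _ _ _ => rfl⟩, fun _ h => absurd h List.not_mem_nil,
      hent⟩

theorem frameEnt_of_fresh {as : List ℕ} {Ψ : S.A} {φ : S.C}
    (hfresh : ∀ a ∈ as, a ∉ S.suppC φ) (hent : S.ent Ψ φ) : FrameEnt S (as, Ψ) φ :=
  ⟨(as, Ψ), ⟨1, List.map_id' as, S.actA_one Ψ, fun _ _ _ => rfl⟩, hfresh, hent⟩

theorem FrameEnt.exists_perm {as : List ℕ} {Ψ : S.A} {φ : S.C} (h : FrameEnt S (as, Ψ) φ) :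
    ∃ π : Equiv.Perm ℕ, (∀ a ∈ as, π a ∉ S.suppC φ) ∧ S.ent (S.actA π Ψ) φ := by
  obtain ⟨⟨bs, Ψ'⟩, ⟨π, hbs, hΨ, -⟩, hfresh, hent⟩ := h
  refine ⟨π, fun a ha => hfresh (π a) ?_, hΨ ▸ hent⟩
  exact hbs ▸ List.mem_map_of_mem ha

end FrameEnt

namespace FrameCounterexample

inductive Assertion : Type where
  | one
  | psi
  | psi'
  | psiAt (a : ℕ)

/-- `phiOne`, entailed by the unit alone, keeps `1` and `Ψ` apart; without it compositionality
would force `Ψ ⊗ Ψ_a` to be equivalent to `1 ⊗ Ψ_a = Ψ_a`. -/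
inductive Condition : Type where
  | phiOne
  | phi'
  | phiAt (a : ℕ)

def Condition.perm (π : Equiv.Perm ℕ) : Condition → Condition
  | .phiAt a => .phiAt (π a)
  | x => x

def Condition.supp : Condition → Finset ℕ
  | .phiAt a => {a}
  | _ => ∅

namespace Assertion

def perm (π : Equiv.Perm ℕ) : Assertion → Assertion
  | psiAt a => psiAt (π a)
  | x => x

def supp : Assertion → Finset ℕ
  | psiAt a => {a}
  | _ => ∅

def Entails : Assertion → Condition → Prop
  | one, .phiOne => True
  | psi', .phi' => True
  | psiAt a, .phiAt b => a = b
  | _, _ => False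

def comp : Assertion → Assertion → Assertion
  | one, x => x
  | x, one => x
  | psi, psi => psi
  | _, _ => psi'

theorem comp_one (x : Assertion) : comp x one = x := by
  cases x <;> rfl

theorem comp_comm (x y : Assertion) : comp x y = comp y x := by
  cases x <;> cases y <;> rfl

theorem comp_assoc (x y z : Assertion) : comp (comp x y) z = comp x (comp y z) := by
  cases x <;> cases y <;> cases z <;> rfl

theorem eq_of_forall_entails_iff {x y : Assertion} (h : ∀ φ, Entails x φ ↔ Entails y φ) :
    x = y := by
  rcases x with _ | _ | _ | a <;> rcases y with _ | _ | _ | b <;>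
    first
    | rfl
    | exact ((h .phiOne).1 trivial).elim
    | exact ((h .phiOne).2 trivial).elim
    | exact ((h .phi').1 trivial).elim
    | exact ((h .phi').2 trivial).elim
    | exact ((h (.phiAt a)).1 rfl).elim
    | exact ((h (.phiAt b)).2 rfl).elim
    | exact congrArg psiAt ((h (.phiAt a)).1 rfl).symm

theorem mem_supp_of_entails {a : ℕ} {φ : Condition} (h : Entails (psiAt a) φ) :
    a ∈ φ.supp := by
  cases φ with
  | phiAt b => exact Finset.mem_singleton.2 h
  | _ => exact h.elim

end Assertion

open Assertion

abbrev nomEnt : NomEnt where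
  A := Assertion
  C := Condition
  actA := Assertion.perm
  actC := Condition.perm
  actA_one x := by cases x <;> rfl
  actA_mul _ _ x := by cases x <;> rfl
  actC_one x := by cases x <;> rfl
  actC_mul _ _ x := by cases x <;> rfl
  suppA := Assertion.supp
  suppC := Condition.supp
  suppA_spec x π h := by
    cases x <;> simp_all [Assertion.perm, Assertion.supp]
  suppC_spec x π h := by
    cases x <;> simp_all [Condition.perm, Condition.supp]
  ent := Entails
  ent_equivariant π x φ := by
    cases x <;> cases φ <;> simp [Entails, Assertion.perm, Condition.perm]

abbrev psiCalc : PsiCalc where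
  toNomEnt := nomEnt
  T := Unit
  chanEq _ _ := .phi'
  comp := Assertion.comp
  unit := one
  chanSym _ _ _ h := h
  chanTrans _ _ _ _ h _ := h
  compositional x y _ h := by
    rw [eq_of_forall_entails_iff h]
    exact fun _ => Iff.rfl
  identity x _ := by rw [comp_one]
  assoc x y z _ := by rw [comp_assoc]
  comm x y _ := by rw [comp_comm]

theorem not_frameEnt_psi (φ : Condition) : ¬ FrameEnt nomEnt (([], psi) : Frame nomEnt) φ := by
  rw [frameEnt_nil_iff]
  cases φ <;> exact id

theorem not_frameEnt_bind_psiAt (a : ℕ) (φ : Condition) :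
    ¬ FrameEnt nomEnt (([a], psiAt a) : Frame nomEnt) φ := by
  intro h
  obtain ⟨π, hfresh, hent⟩ := h.exists_perm
  exact hfresh a (List.mem_singleton_self a) (mem_supp_of_entails hent)

theorem frameEnt_bind_psi' (as : List ℕ) : FrameEnt nomEnt ((as, psi') : Frame nomEnt) .phi' :=
  frameEnt_of_fresh (fun _ _ => Finset.notMem_empty _) trivial

end FrameCounterexample

open FrameCounterexample Assertion

/-- frame composition is not compositional in general.  There
is a psi-calculus (satisfying all the requisites) with an assertion `Ψ` and
an assertion `Ψa` such that the frame `(ν a)Ψa` is equivalent to the frame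
`Ψ` (with no binders), the binder `a` is fresh for `Ψ`, yet composing both
with the frame `Ψ` yields inequivalent frames:
`Ψ ⊗ (ν a)Ψa` is not equivalent to `Ψ ⊗ Ψ`. -/
theorem frame_composition_not_compositional :
    ∃ (S : PsiCalc) (a : ℕ) (Ψa Ψ : S.A),
      a ∉ S.suppA Ψ ∧
      FrameEquiv S.toNomEnt ([a], Ψa) ([], Ψ) ∧
      ¬ FrameEquiv S.toNomEnt
          (frameComp S (([], Ψ) : Frame S.toNomEnt) (([a], Ψa) : Frame S.toNomEnt))
          (frameComp S (([], Ψ) : Frame S.toNomEnt) (([], Ψ) : Frame S.toNomEnt)) := by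
  refine ⟨psiCalc, 0, psiAt 0, psi, Finset.notMem_empty 0, ?_, ?_⟩
  · exact fun φ => iff_of_false (not_frameEnt_bind_psiAt 0 φ) (not_frameEnt_psi φ)
  · intro h
    exact not_frameEnt_psi .phi' ((h .phi').1 (frameEnt_bind_psi' [0]))
end

section
/- If abstract bisimilarity is invariant under replacing the environment by an equivalent one (Ψ ≃ Ψ' and P ∼_Ψ Q imply P ∼_{Ψ'} Q) whenever transitions and static equivalence are invariant under ≃-equivalent environments, where ≃ is a congruence for ⊗. -/
section AbstractBisim

variable {Proc Act Env : Type}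

/-- A bisimulation over an environment-indexed labelled transition system:
a ternary relation between environments and pairs of processes satisfying
static equivalence, symmetry, extension of arbitrary assertion, and
simulation.  Environments form a commutative monoid with composition `*`. -/
def IsBisim [CommMonoid Env]
    (trans : Env → Proc → Act → Proc → Prop)
    (SE : Env → Proc → Proc → Prop)
    (R : Env → Proc → Proc → Prop) : Prop :=
  ∀ Ψ P Q, R Ψ P Q →
    SE Ψ P Q ∧
    R Ψ Q P ∧
    (∀ Ψ', R (Ψ * Ψ') P Q) ∧
    (∀ α P', trans Ψ P α P' → ∃ Q', trans Ψ Q α Q' ∧ R Ψ P' Q')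

/-- Bisimilarity: the union of all bisimulations. -/
def Bisim [CommMonoid Env]
    (trans : Env → Proc → Act → Proc → Prop)
    (SE : Env → Proc → Proc → Prop)
    (Ψ : Env) (P Q : Proc) : Prop :=
  ∃ R, IsBisim trans SE R ∧ R Ψ P Q

end AbstractBisim

section EnvEquiv

variable {Proc Act Env : Type} [CommMonoid Env]
  {trans : Env → Proc → Act → Proc → Prop} {SE : Env → Proc → Proc → Prop}

theorem isBisim_bisim : IsBisim trans SE (Bisim trans SE) := by
  rintro Ψ P Q ⟨R, hR, hPQ⟩
  obtain ⟨hSE, hsym, hext, hsim⟩ := hR Ψ P Q hPQ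
  refine ⟨hSE, ⟨R, hR, hsym⟩, fun Ψ' => ⟨R, hR, hext Ψ'⟩, fun α P' hP' => ?_⟩
  obtain ⟨Q', hQ', hR'⟩ := hsim α P' hP'
  exact ⟨Q', hQ', R, hR, hR'⟩

theorem IsBisim.envEquivClosure {R : Env → Proc → Proc → Prop} {eqv : Env → Env → Prop}
    (hR : IsBisim trans SE R)
    (hcong : ∀ Ψ Ψ' Ψ'', eqv Ψ Ψ' → eqv (Ψ * Ψ'') (Ψ' * Ψ''))
    (htransInv : ∀ Ψ Ψ' P α P', eqv Ψ Ψ' → (trans Ψ P α P' ↔ trans Ψ' P α P'))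
    (hSEInv : ∀ Ψ Ψ' P Q, eqv Ψ Ψ' → (SE Ψ P Q ↔ SE Ψ' P Q)) :
    IsBisim trans SE (fun Ψ' P Q => ∃ Ψ, eqv Ψ Ψ' ∧ R Ψ P Q) := by
  rintro Ψ' P Q ⟨Ψ, hΨ, hPQ⟩
  obtain ⟨hSE, hsym, hext, hsim⟩ := hR Ψ P Q hPQ
  refine ⟨(hSEInv Ψ Ψ' P Q hΨ).mp hSE, ⟨Ψ, hΨ, hsym⟩,
    fun Ψ'' => ⟨Ψ * Ψ'', hcong Ψ Ψ' Ψ'' hΨ, hext Ψ''⟩, fun α P' hP' => ?_⟩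
  obtain ⟨Q', hQ', hR'⟩ := hsim α P' ((htransInv Ψ Ψ' P α P' hΨ).mpr hP')
  exact ⟨Q', (htransInv Ψ Ψ' Q α Q' hΨ).mp hQ', Ψ, hΨ, hR'⟩

end EnvEquiv

theorem bisim_env_equiv_invariant_general {Proc Act Env : Type} [CommMonoid Env]
    (trans : Env → Proc → Act → Proc → Prop)
    (SE : Env → Proc → Proc → Prop)
    (eqv : Env → Env → Prop)
    (hcong : ∀ Ψ Ψ' Ψ'', eqv Ψ Ψ' → eqv (Ψ * Ψ'') (Ψ' * Ψ''))
    (htransInv : ∀ Ψ Ψ' P α P', eqv Ψ Ψ' → (trans Ψ P α P' ↔ trans Ψ' P α P'))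
    (hSEInv : ∀ Ψ Ψ' P Q, eqv Ψ Ψ' → (SE Ψ P Q ↔ SE Ψ' P Q)) :
    IsBisim trans SE
      (fun Ψ' P Q => ∃ Ψ, eqv Ψ Ψ' ∧ Bisim trans SE Ψ P Q) ∧
    ∀ Ψ Ψ' P Q, eqv Ψ Ψ' → Bisim trans SE Ψ P Q → Bisim trans SE Ψ' P Q := by
  have hclosure := isBisim_bisim.envEquivClosure hcong htransInv hSEInv
  exact ⟨hclosure, fun Ψ Ψ' P Q hΨ hPQ => ⟨_, hclosure, Ψ, hΨ, hPQ⟩⟩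

/-- bisimilarity is invariant under replacing the environment
by an equivalent one, whenever transitions and static equivalence are
invariant under ≃-equivalent environments and ≃ is a congruence for
composition.  Concretely, the candidate relation
`{(Ψ', P, Q) : ∃ Ψ, Ψ ≃ Ψ' ∧ P ∼_Ψ Q}` is a bisimulation, and hence
`Ψ ≃ Ψ'` and `P ∼_Ψ Q` imply `P ∼_{Ψ'} Q`. -/
theorem bisim_env_equiv_invariant {Proc Act Env : Type} [CommMonoid Env]
    (trans : Env → Proc → Act → Proc → Prop)
    (SE : Env → Proc → Proc → Prop)
    (eqv : Env → Env → Prop)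
    (heqv : Equivalence eqv)
    (hcong : ∀ Ψ Ψ' Ψ'', eqv Ψ Ψ' → eqv (Ψ * Ψ'') (Ψ' * Ψ''))
    (htransInv : ∀ Ψ Ψ' P α P', eqv Ψ Ψ' → (trans Ψ P α P' ↔ trans Ψ' P α P'))
    (hSEInv : ∀ Ψ Ψ' P Q, eqv Ψ Ψ' → (SE Ψ P Q ↔ SE Ψ' P Q)) :
    IsBisim trans SE
      (fun Ψ' P Q => ∃ Ψ, eqv Ψ Ψ' ∧ Bisim trans SE Ψ P Q) ∧
    ∀ Ψ Ψ' P Q, eqv Ψ Ψ' → Bisim trans SE Ψ P Q → Bisim trans SE Ψ' P Q :=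
  bisim_env_equiv_invariant_general trans SE eqv hcong htransInv hSEInv
end
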